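/- Let α ∈ (0,1/2), q = Φ^{-1}(1−α) > 0, η > 0, and let X1 ~ N(γ, ν²) and S1 ~ N(μ, σ²) be independent with γ, σ, ν > 0 and μ > σ·q. For w ∈ [0,1] set μ_w = wμ + 1 − w and σ_w = wσ, let R0^w be the unique positive solution of γ − r·μ_w + q·√(r²σ_w² + ν²) = 0 (i.e. of VaR_α(R0^w(wS1+1−w) − X1) = 0), and set C0^w = E[(R0^w(wS1+1−w) − X1)^+]/(1+η). Then C0^0 < C0^w for all w ∈ (0,1]. -/

import Mathlib

open MeasureTheory ProbabilityTheory Real Set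

noncomputable def VaR {Ω : Type*} [MeasurableSpace Ω] (P : Measure Ω) (β : ℝ) (Y : Ω → ℝ) : ℝ :=
  sInf {y : ℝ | 1 - β ≤ (P {ω | -Y ω ≤ y}).toReal}

noncomputable def ES {Ω : Type*} [MeasurableSpace Ω] (P : Measure Ω) (α : ℝ) (Y : Ω → ℝ) : ℝ :=
  (1 / α) * ∫ β in (0:ℝ)..α, VaR P β Y

noncomputable def stdNormalCDF (x : ℝ) : ℝ := ((gaussianReal 0 1) (Iic x)).toReal

noncomputable def stdNormalPDF (x : ℝ) : ℝ := (Real.sqrt (2 * π))⁻¹ * Real.exp (-x ^ 2 / 2)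

/-! For a Gaussian net asset `Y ~ N(m, s²)` the zero-VaR equation reads `m = q s`, so `Y` has the
law of `s (Z + q)` with `Z` standard normal and `E[Y⁺] = s · E[(Z + q)⁺]`, where `E[(Z + q)⁺] > 0`.
Hence the shareholder value is proportional to the standard deviation of the net asset
`R_w (w S₁ + 1 - w) - X₁`, which is `√(R_w² w² σ² + ν²)` and exceeds its value `|ν|` at `w = 0`. -/

open scoped NNReal

lemma integrable_max_add_zero_gaussianReal (q m : ℝ) (v : ℝ≥0) :
    Integrable (fun z ↦ max (z + q) 0) (gaussianReal m v) :=
  (IsGaussian.integrable_id.add (integrable_const q)).sup (integrable_const 0)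

lemma integral_max_add_zero_gaussianReal_pos (q : ℝ) :
    0 < ∫ z, max (z + q) 0 ∂gaussianReal 0 1 := by
  rw [integral_pos_iff_support_of_nonneg (f := fun z ↦ max (z + q) 0)
    (fun z ↦ le_max_right _ _) (integrable_max_add_zero_gaussianReal q 0 1)]
  have hsupp : Ioi (-q) ⊆ Function.support fun z : ℝ ↦ max (z + q) 0 := by
    intro z hz
    have : 0 < z + q := by rw [mem_Ioi] at hz; linarith
    simpa [Function.mem_support, max_eq_left this.le] using this.ne'
  refine (pos_iff_ne_zero.2 fun h ↦ ?_).trans_le (measure_mono hsupp)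
  simpa using gaussianReal_absolutelyContinuous' 0 one_ne_zero h

lemma integral_max_zero_gaussianReal (q : ℝ) {v : ℝ} (hv : 0 ≤ v) :
    ∫ x, max x 0 ∂gaussianReal (q * √v) v.toNNReal
      = √v * ∫ z, max (z + q) 0 ∂gaussianReal 0 1 := by
  have hZ : HasLaw (fun z ↦ √v * z + q * √v)
      (gaussianReal (q * √v) v.toNNReal) (gaussianReal 0 1) := by
    convert gaussianReal_add_const (gaussianReal_const_mul (HasLaw.id (μ := gaussianReal 0 1)) √v)
      (q * √v) using 2
    · simp
    · ring
    · ext; simp [sq_sqrt hv, hv]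
  rw [← hZ.integral_comp (by fun_prop), ← integral_const_mul]
  congr 1 with z
  rw [Function.comp_apply, mul_max_of_nonneg _ _ (sqrt_nonneg v), mul_zero]
  ring_nf

section NetAsset

variable {Ω : Type*} [MeasurableSpace Ω] {P : Measure Ω} {X S : Ω → ℝ} {γ ν μ σ : ℝ}

lemma hasLaw_of_map_eq_gaussianReal {m : ℝ} {v : ℝ≥0} (h : P.map X = gaussianReal m v) :
    HasLaw X (gaussianReal m v) P :=
  ⟨AEMeasurable.of_map_ne_zero (h ▸ IsProbabilityMeasure.ne_zero _), h⟩

lemma hasLaw_mul_add_sub_of_indepFun (hX : P.map X = gaussianReal γ (ν ^ 2).toNNReal)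
    (hS : P.map S = gaussianReal μ (σ ^ 2).toNNReal) (hXS : IndepFun X S P) (c d : ℝ) :
    HasLaw (fun ω ↦ c * S ω + d - X ω)
      (gaussianReal (c * μ + d - γ) ((c * σ) ^ 2 + ν ^ 2).toNNReal) P := by
  have hcS := gaussianReal_add_const
    (gaussianReal_const_mul (hasLaw_of_map_eq_gaussianReal hS) c) d
  have hnegX := gaussianReal_neg (hasLaw_of_map_eq_gaussianReal hX)
  have hind : IndepFun (fun ω ↦ c * S ω + d) (-X) P :=
    hXS.symm.comp (φ := fun s ↦ c * s + d) (ψ := fun x ↦ -x) (by fun_prop) (by fun_prop)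
  have := hind.hasLaw_add hcS hnegX
  rw [gaussianReal_conv_gaussianReal] at this
  convert this using 2
  · exact sub_eq_add_neg _ _
  · exact sub_eq_add_neg _ _
  · ext
    simp only [NNReal.coe_add, NNReal.coe_mul, NNReal.coe_mk, Real.coe_toNNReal _ (sq_nonneg _),
      Real.coe_toNNReal _ (by positivity : 0 ≤ (c * σ) ^ 2 + ν ^ 2)]
    ring

lemma integral_max_netAsset_eq (hX : P.map X = gaussianReal γ (ν ^ 2).toNNReal)
    (hS : P.map S = gaussianReal μ (σ ^ 2).toNNReal) (hXS : IndepFun X S P) {q r w : ℝ}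
    (hr : γ - r * (w * μ + 1 - w) + q * √(r ^ 2 * (w * σ) ^ 2 + ν ^ 2) = 0) :
    ∫ ω, max (r * (w * S ω + 1 - w) - X ω) 0 ∂P
      = √(r ^ 2 * (w * σ) ^ 2 + ν ^ 2) * ∫ z, max (z + q) 0 ∂gaussianReal 0 1 := by
  have hv : 0 ≤ r ^ 2 * (w * σ) ^ 2 + ν ^ 2 := by positivity
  have hlaw : HasLaw (fun ω ↦ r * (w * S ω + 1 - w) - X ω)
      (gaussianReal (q * √(r ^ 2 * (w * σ) ^ 2 + ν ^ 2))
        (r ^ 2 * (w * σ) ^ 2 + ν ^ 2).toNNReal) P := by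
    convert hasLaw_mul_add_sub_of_indepFun hX hS hXS (r * w) (r * (1 - w)) using 2
    · ring
    · linear_combination hr
    · congr 1; ring
  rw [← integral_max_zero_gaussianReal q hv]
  exact hlaw.integral_comp (f := fun x ↦ max x 0) (by fun_prop)

end NetAsset

theorem C0_riskless_lt_C0_risky_general
    {Ω : Type*} [MeasurableSpace Ω] (P : Measure Ω)
    (q η γ ν μ σ : ℝ) (hη : 0 < η) (hσ : 0 < σ)
    (X1 S1 : Ω → ℝ)
    (hX : P.map X1 = gaussianReal γ (ν ^ 2).toNNReal)
    (hS : P.map S1 = gaussianReal μ (σ ^ 2).toNNReal)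
    (hindep : IndepFun X1 S1 P)
    (R : ℝ → ℝ)
    (hR : ∀ w ∈ Icc (0:ℝ) 1, 0 < R w ∧
        γ - R w * (w * μ + 1 - w) + q * Real.sqrt ((R w)^2 * (w * σ)^2 + ν^2) = 0) :
    ∀ w ∈ Ioc (0:ℝ) 1,
      (∫ ω, max (R 0 - X1 ω) 0 ∂P) / (1 + η)
        < (∫ ω, max (R w * (w * S1 ω + 1 - w) - X1 ω) 0 ∂P) / (1 + η) := by
  intro w hw
  obtain ⟨hRw, hVaRw⟩ := hR w (Ioc_subset_Icc_self hw)
  obtain ⟨hw0, -⟩ := hw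
  have hC0 := integral_max_netAsset_eq hX hS hindep (hR 0 ⟨le_rfl, zero_le_one⟩).2
  simp only [zero_mul, zero_add, sub_zero, mul_one, zero_pow two_ne_zero, mul_zero] at hC0
  rw [hC0, integral_max_netAsset_eq hX hS hindep hVaRw]
  have hK := integral_max_add_zero_gaussianReal_pos q
  gcongr
  exact lt_add_of_pos_left _ (by positivity)

/-- the shareholder value `C0^w` with risky investment always
exceeds the risk-less one `C0^0`, for every `w ∈ (0,1]`. -/
theorem C0_riskless_lt_C0_risky
    {Ω : Type*} [MeasurableSpace Ω] (P : Measure Ω) [IsProbabilityMeasure P]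
    (α q η γ ν μ σ : ℝ) (hα : α ∈ Ioo (0:ℝ) (1/2))
    (hq : stdNormalCDF q = 1 - α) (hq0 : 0 < q) (hη : 0 < η)
    (hγ : 0 < γ) (hν : 0 < ν) (hσ : 0 < σ) (hμσ : σ * q < μ)
    (X1 S1 : Ω → ℝ) (hX1m : Measurable X1) (hS1m : Measurable S1)
    (hX : P.map X1 = gaussianReal γ (ν ^ 2).toNNReal)
    (hS : P.map S1 = gaussianReal μ (σ ^ 2).toNNReal)
    (hindep : IndepFun X1 S1 P)
    (R : ℝ → ℝ)
    (hR : ∀ w ∈ Icc (0:ℝ) 1, 0 < R w ∧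
        γ - R w * (w * μ + 1 - w) + q * Real.sqrt ((R w)^2 * (w * σ)^2 + ν^2) = 0)
    (hRuniq : ∀ w ∈ Icc (0:ℝ) 1, ∀ r : ℝ, 0 < r →
        γ - r * (w * μ + 1 - w) + q * Real.sqrt (r^2 * (w * σ)^2 + ν^2) = 0 → r = R w) :
    ∀ w ∈ Ioc (0:ℝ) 1,
      (∫ ω, max (R 0 - X1 ω) 0 ∂P) / (1 + η)
        < (∫ ω, max (R w * (w * S1 ω + 1 - w) - X1 ω) 0 ∂P) / (1 + η) :=
  C0_riskless_lt_C0_risky_general P q η γ ν μ σ hη hσ X1 S1 hX hS hindep R hR
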